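/- For a nondegenerate triangle (p, q, r) in ℝ³, the gradient of Area with respect to p can be written in the cotangent form: ∇_p Area = (1/2)[cot(∠q)(p − r) + cot(∠r)(p − q)], where ∠q, ∠r are the interior angles at q and r. -/

import Mathlib

/-!
Put `n = (q - p) × (r - p)`. The map `x ↦ (q - x) × (r - x)` is affine with linear part
`v ↦ v × (q - r)`, whose adjoint is `w ↦ (q - r) × w`; since `‖·‖` has gradient `n / ‖n‖` at `n`,
the chain rule gives `∇_p Area = (q - r) × n / (2‖n‖)`. The BAC–CAB rule expands `(q - r) × n`
as `⟪p - q, r - q⟫ (p - r) + ⟪p - r, q - r⟫ (p - q)`. Finally `‖u × v‖ = ‖u‖ ‖v‖ sin ∠(u, v)`,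
so `cot ∠(u, v) = ⟪u, v⟫ / ‖u × v‖`, and the edge cross products at `q` and at `r` both have
norm `‖n‖`.
-/

open InnerProductGeometry

/-- The cross product on `ℝ³` with its euclidean inner-product structure. -/
noncomputable def cross3 (u v : EuclideanSpace ℝ (Fin 3)) :
    EuclideanSpace ℝ (Fin 3) :=
  WithLp.toLp 2 (crossProduct u v)

open scoped RealInnerProductSpace

section Gradient

variable {E F : Type*} [NormedAddCommGroup E] [InnerProductSpace ℝ E] [CompleteSpace E]
  [NormedAddCommGroup F] [InnerProductSpace ℝ F] [CompleteSpace F]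

theorem HasGradientAt.comp_hasFDerivAt {g : F → ℝ} {g' : F} {f : E → F} {L : E →L[ℝ] F} {x : E}
    (hg : HasGradientAt g g' (f x)) (hf : HasFDerivAt f L x) :
    HasGradientAt (fun y => g (f y)) (L.adjoint g') x := by
  rw [hasGradientAt_iff_hasFDerivAt] at hg ⊢
  refine (hg.comp x hf).congr_fderiv ?_
  ext v
  simp [ContinuousLinearMap.adjoint_inner_left]

theorem HasGradientAt.const_mul {f : F → ℝ} {f' x : F} (hf : HasGradientAt f f' x) (c : ℝ) :
    HasGradientAt (fun y => c * f y) (c • f') x := by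
  rw [hasGradientAt_iff_hasFDerivAt] at hf ⊢
  simpa using hf.const_mul c

theorem hasGradientAt_norm {y : F} (hy : y ≠ 0) : HasGradientAt (‖·‖) (‖y‖⁻¹ • y) y := by
  have hsqrt : HasDerivAt Real.sqrt (1 / (2 * Real.sqrt (‖y‖ ^ 2))) (‖y‖ ^ 2) :=
    Real.hasDerivAt_sqrt (by positivity)
  have h := hsqrt.comp_hasFDerivAt y (hasStrictFDerivAt_norm_sq y).hasFDerivAt
  simp only [Function.comp_def, Real.sqrt_sq (norm_nonneg _)] at h
  rw [hasGradientAt_iff_hasFDerivAt]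
  refine h.congr_fderiv ?_
  ext v
  have : ‖y‖ ≠ 0 := norm_ne_zero_iff.mpr hy
  simp only [one_div, mul_inv_rev, smul_apply, coe_innerSL_apply, nsmul_eq_mul, Nat.cast_ofNat,
    smul_eq_mul, map_smul, InnerProductSpace.toDual_apply_apply]
  field_simp

end Gradient

open Matrix

theorem EuclideanSpace.real_inner_eq_dotProduct {ι : Type*} [Fintype ι]
    (u v : EuclideanSpace ℝ ι) : ⟪u, v⟫ = (u : ι → ℝ) ⬝ᵥ v := by
  simp [EuclideanSpace.inner_eq_star_dotProduct, dotProduct_comm]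

local notation "E3" => EuclideanSpace ℝ (Fin 3)

open EuclideanSpace in
theorem inner_cross3 (u v w : E3) : ⟪u, cross3 v w⟫ = ⟪v, cross3 w u⟫ := by
  simp only [real_inner_eq_dotProduct, cross3]
  exact triple_product_permutation _ _ _

open EuclideanSpace in
theorem norm_cross3_sq (u v : E3) :
    ‖cross3 u v‖ ^ 2 = ⟪u, u⟫ * ⟪v, v⟫ - ⟪u, v⟫ * ⟪u, v⟫ := by
  rw [← real_inner_self_eq_norm_sq]
  simp only [real_inner_eq_dotProduct, cross3]
  rw [cross_dot_cross, dotProduct_comm v u]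

theorem norm_cross3 (u v : E3) : ‖cross3 u v‖ = Real.sin (angle u v) * (‖u‖ * ‖v‖) := by
  rw [sin_angle_mul_norm_mul_norm, ← norm_cross3_sq, Real.sqrt_sq (norm_nonneg _)]

-- If `u = 0` or `v = 0` both sides are `0`: `angle u 0 = π / 2` and `x / 0 = 0`.
theorem cot_angle_eq_inner_div_norm_cross3 (u v : E3) :
    Real.cos (angle u v) / Real.sin (angle u v) = ⟪u, v⟫ / ‖cross3 u v‖ := by
  rcases eq_or_ne u 0 with rfl | hu
  · simp
  rcases eq_or_ne v 0 with rfl | hv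
  · simp
  rw [norm_cross3, ← cos_angle_mul_norm_mul_norm, mul_div_mul_right]
  positivity

noncomputable def cross3RightCLM (b : E3) : E3 →L[ℝ] E3 :=
  LinearMap.toContinuousLinearMap
    { toFun := fun v => cross3 v b
      map_add' := fun v w => by simp [cross3]
      map_smul' := fun c v => by simp [cross3] }

@[simp]
theorem cross3RightCLM_apply (b v : E3) : cross3RightCLM b v = cross3 v b := rfl

theorem adjoint_cross3RightCLM_apply (b w : E3) : (cross3RightCLM b).adjoint w = cross3 b w :=
  ext_inner_right ℝ fun v => by
    rw [ContinuousLinearMap.adjoint_inner_left, cross3RightCLM_apply, inner_cross3,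
      real_inner_comm]

theorem cross3_sub_sub (a b x : E3) :
    cross3 (a - x) (b - x) = cross3 a b + cross3 x (a - b) := by
  ext i
  fin_cases i <;> simp [cross3, cross_apply] <;> ring

theorem hasGradientAt_norm_cross3_sub_sub (a b x : E3) (h : cross3 (a - x) (b - x) ≠ 0) :
    HasGradientAt (fun y => ‖cross3 (a - y) (b - y)‖)
      (‖cross3 (a - x) (b - x)‖⁻¹ • cross3 (a - b) (cross3 (a - x) (b - x))) x := by
  have hf : HasFDerivAt (fun y => cross3 (a - y) (b - y)) (cross3RightCLM (a - b)) x := by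
    simp only [cross3_sub_sub]
    exact (cross3RightCLM (a - b)).hasFDerivAt.const_add _
  simpa only [map_smul, adjoint_cross3RightCLM_apply] using
    (hasGradientAt_norm h).comp_hasFDerivAt (f := fun y => cross3 (a - y) (b - y)) hf

theorem cross3_sub_cross3_sub_sub (p q r : E3) :
    cross3 (q - r) (cross3 (q - p) (r - p)) =
      ⟪p - q, r - q⟫ • (p - r) + ⟪p - r, q - r⟫ • (p - q) := by
  ext i
  fin_cases i <;>
    simp [cross3, cross_apply, EuclideanSpace.real_inner_eq_dotProduct, dotProduct,
      Fin.sum_univ_three] <;> ring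

theorem cross3_sub_sub_swap (p q r : E3) :
    cross3 (p - q) (r - q) = -cross3 (q - p) (r - p) := by
  ext i
  fin_cases i <;> simp [cross3, cross_apply] <;> ring

theorem cross3_sub_sub_rotate (p q r : E3) :
    cross3 (p - r) (q - r) = cross3 (q - p) (r - p) := by
  ext i
  fin_cases i <;> simp [cross3, cross_apply] <;> ring

/-- **Cotangent form of the area gradient for a single triangle.**
For a nondegenerate triangle `(p, q, r)` in `ℝ³` with area
`Area(x,q,r) = (1/2)‖(q−x)×(r−x)‖`, and interior angles `∠q` (between `p−q`
and `r−q`) and `∠r` (between `p−r` and `q−r`), the gradient of the area with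
respect to `p` is `∇_p Area = (1/2)[cot(∠q)(p − r) + cot(∠r)(p − q)]`. -/
theorem triangle_area_gradient_cotangent
    (p q r : EuclideanSpace ℝ (Fin 3))
    (hnd : cross3 (q - p) (r - p) ≠ 0) :
    gradient (fun x => (1/2 : ℝ) * ‖cross3 (q - x) (r - x)‖) p
      = (1/2 : ℝ) •
          ((Real.cos (angle (p - q) (r - q)) / Real.sin (angle (p - q) (r - q)))
              • (p - r)
            + (Real.cos (angle (p - r) (q - r)) / Real.sin (angle (p - r) (q - r)))
              • (p - q)) := by
  rw [((hasGradientAt_norm_cross3_sub_sub q r p hnd).const_mul (1/2)).gradient,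
    cot_angle_eq_inner_div_norm_cross3, cot_angle_eq_inner_div_norm_cross3,
    cross3_sub_sub_swap p q r, norm_neg, cross3_sub_sub_rotate p q r,
    cross3_sub_cross3_sub_sub]
  module
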